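/- Let L be an n×n real symmetric matrix whose eigenvalues all lie in [−4, 0], let γ > 0, and let Z be an n×T real matrix. Define f(k̄) = ‖(I + γ(k̄ I + L)²)^{−1/2} Z‖₂ for k̄ ∈ [0, 4]. Then f is Lipschitz continuous on [0, 4] with Lipschitz constant L_{k̄} satisfying: L_{k̄} ≤ (2/(3√3))·√γ·‖Z‖₂ if γ ≥ 1/32, and L_{k̄} ≤ 4γ(1 + 16γ)^{−3/2}·‖Z‖₂ if γ < 1/32; in either case L_{k̄} ≤ (2/(3√3))·√γ·‖Z‖₂. -/

import Mathlib

open Matrix Filter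
open scoped Classical

/-- Euclidean norm of a vector. -/
noncomputable def euclNorm {n : Type*} [Fintype n] (v : n → ℝ) : ℝ :=
  Real.sqrt (∑ i, v i ^ 2)

/-- Spectral norm (largest singular value) of a matrix: the supremum of
`‖M x‖₂` over the Euclidean unit ball. -/
noncomputable def specNorm {m n : Type*} [Fintype m] [Fintype n] (M : Matrix m n ℝ) : ℝ :=
  sSup {y | ∃ x : n → ℝ, euclNorm x ≤ 1 ∧ y = euclNorm (M.mulVec x)}

/-- `A^{-1/2}`: the inverse of the positive semidefinite square root of `A`
(junk value `0` if `A` is not positive semidefinite). -/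
noncomputable def invSqrt {n : Type*} [Fintype n] [DecidableEq n]
    (A : Matrix n n ℝ) : Matrix n n ℝ :=
  if h : A.PosSemidef then
    (h.1.eigenvectorUnitary.1 * diagonal ((↑) ∘ (√·) ∘ h.1.eigenvalues) *
      (star h.1.eigenvectorUnitary : Matrix n n ℝ))⁻¹ else 0

/-- Squared Frobenius norm helper via entries, and Frobenius norm. -/
noncomputable def frobNorm {m n : Type*} [Fintype m] [Fintype n] (M : Matrix m n ℝ) : ℝ :=
  Real.sqrt (∑ i, ∑ j, M i j ^ 2)

/-- Frobenius (trace) inner product. -/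
noncomputable def frobInner {m n : Type*} [Fintype m] [Fintype n]
    (A B : Matrix m n ℝ) : ℝ :=
  ∑ i, ∑ j, A i j * B i j

/-! On the spectrum of `L`, the matrix `(I + γ(k̄ I + L)²)^{-1/2}` is the functional calculus of
`x ↦ (1 + γ(k̄ + x)²)^{-1/2}`, and the spectral norm is the `C⋆`-norm of matrices, so
`|f k̄ - f k̄'|` is at most `‖Z‖₂` times the largest change of `φ(t) = (1 + γt²)^{-1/2}` between
`k̄ + x` and `k̄' + x` for `x` in the spectrum `⊆ [-4, 0]`. By the mean value theorem on `[-4, 4]`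
this is at most `|k̄ - k̄'| · sup |φ'|`, where `|φ'(t)|² = γ u / (1 + u)³` with `u = γt²`. The
function `u / (1 + u)³` is at most `4/27` (attained at `u = 1/2`) and is increasing on `[0, 1/2]`,
which contains `γt² ≤ 16γ` when `γ ≤ 1/32`. -/

open scoped Matrix.Norms.L2Operator MatrixOrder

section SpectralNorm

variable {m n : Type*} [Fintype m] [Fintype n]

lemma euclNorm_eq_norm_toLp (v : n → ℝ) : euclNorm v = ‖WithLp.toLp 2 v‖ := by
  simp [euclNorm, EuclideanSpace.norm_eq]

lemma specNorm_eq_l2_opNorm (M : Matrix m n ℝ) : specNorm M = ‖M‖ := by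
  rw [Matrix.l2_opNorm_def, ← ContinuousLinearMap.sSup_unitClosedBall_eq_norm, specNorm]
  congr 1
  ext y
  constructor
  · rintro ⟨x, hx, rfl⟩
    exact ⟨WithLp.toLp 2 x, by simpa [← euclNorm_eq_norm_toLp], by simp [euclNorm_eq_norm_toLp]⟩
  · rintro ⟨x, hx, rfl⟩
    exact ⟨x.ofLp, by simpa [euclNorm_eq_norm_toLp] using hx, by simp [euclNorm_eq_norm_toLp]; rfl⟩

end SpectralNorm

section FunctionalCalculus

variable {m n : Type*} [Fintype m] [Fintype n] [DecidableEq n]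

lemma abs_norm_cfc_mul_sub_norm_cfc_mul_le {L : Matrix n n ℝ} {g h : ℝ → ℝ} {c : ℝ} (hc : 0 ≤ c)
    (hgh : ∀ x ∈ spectrum ℝ L, |g x - h x| ≤ c) (Z : Matrix n m ℝ) :
    |‖cfc g L * Z‖ - ‖cfc h L * Z‖| ≤ c * ‖Z‖ :=
  calc |‖cfc g L * Z‖ - ‖cfc h L * Z‖| ≤ ‖cfc g L * Z - cfc h L * Z‖ := abs_norm_sub_norm_le _ _
    _ = ‖cfc (fun x => g x - h x) L * Z‖ := by
        rw [← Matrix.sub_mul, cfc_sub g h L (L.finite_real_spectrum.continuousOn g)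
          (L.finite_real_spectrum.continuousOn h)]
    _ ≤ ‖cfc (fun x => g x - h x) L‖ * ‖Z‖ := Matrix.l2_opNorm_mul _ _
    _ ≤ c * ‖Z‖ := by gcongr; exact norm_cfc_le hc hgh

lemma spectrum_subset_Icc_of_posSemidef {A : Matrix n n ℝ} (hA : IsSelfAdjoint A) {a b : ℝ}
    (ha : (A - a • 1).PosSemidef) (hb : (b • 1 - A).PosSemidef) :
    spectrum ℝ A ⊆ Set.Icc a b := by
  have hle_A : algebraMap ℝ (Matrix n n ℝ) a ≤ A := by
    rw [Matrix.le_iff, Algebra.algebraMap_eq_smul_one]; exact ha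
  have hA_le : A ≤ algebraMap ℝ (Matrix n n ℝ) b := by
    rw [Matrix.le_iff, Algebra.algebraMap_eq_smul_one]; exact hb
  exact fun x hx => ⟨(algebraMap_le_iff_le_spectrum (a := A)).mp hle_A x hx,
    (le_algebraMap_iff_spectrum_le (a := A)).mp hA_le x hx⟩

lemma one_add_smul_sq_eq_cfc {L : Matrix n n ℝ} (hL : IsSelfAdjoint L) (γ k : ℝ) :
    1 + γ • (k • 1 + L) ^ 2 = cfc (fun x => 1 + γ * (k + x) ^ 2) L := by
  rw [cfc_const_add 1 _ L, cfc_const_mul γ _ L, cfc_pow (fun x => k + x) 2 L,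
    cfc_const_add k (fun x => x) L, cfc_id' ℝ L,
    Algebra.algebraMap_eq_smul_one, Algebra.algebraMap_eq_smul_one, one_smul]

lemma invSqrt_cfc {L : Matrix n n ℝ} (hL : IsSelfAdjoint L) {g : ℝ → ℝ}
    (hg : ∀ x ∈ spectrum ℝ L, 0 < g x) :
    invSqrt (cfc g L) = cfc (fun x => (√(g x))⁻¹) L := by
  have hA : (cfc g L).PosSemidef := (cfc_nonneg fun x hx => (hg x hx).le).posSemidef
  have hsqrt : hA.1.eigenvectorUnitary.1 * diagonal ((↑) ∘ (√·) ∘ hA.1.eigenvalues) *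
      (star hA.1.eigenvectorUnitary : Matrix n n ℝ) = cfc (fun x => √(g x)) L := by
    rw [cfc_comp' (√·) g L Real.continuous_sqrt.continuousOn
      (L.finite_real_spectrum.continuousOn g), hA.1.cfc_eq, Matrix.IsHermitian.cfc,
      Unitary.conjStarAlgAut_apply]
    rfl
  rw [invSqrt, dif_pos hA, hsqrt, Matrix.nonsing_inv_eq_ringInverse,
    cfc_inv (fun x => √(g x)) L (fun x hx => (Real.sqrt_pos.mpr (hg x hx)).ne')
      (L.finite_real_spectrum.continuousOn _)]

end FunctionalCalculus

section ScalarBounds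

lemma mul_rpow_neg_three_halves_le_iff {a b u v : ℝ} (ha : 0 ≤ a) (hb : 0 ≤ b) (hu : 0 < u)
    (hv : 0 < v) :
    a * u ^ (-(3 / 2) : ℝ) ≤ b * v ^ (-(3 / 2) : ℝ) ↔ a ^ 2 * v ^ 3 ≤ b ^ 2 * u ^ 3 := by
  have hsq {w : ℝ} (hw : 0 < w) : (w ^ (-(3 / 2) : ℝ)) ^ 2 = (w ^ 3)⁻¹ := by
    rw [← Real.rpow_mul_natCast hw.le, show (-(3 / 2) : ℝ) * (2 : ℕ) = -(3 : ℕ) by norm_num,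
      Real.rpow_neg hw.le, Real.rpow_natCast]
  rw [← pow_le_pow_iff_left₀ (by positivity) (by positivity) two_ne_zero, mul_pow, mul_pow,
    hsq hu, hsq hv, ← div_eq_mul_inv, ← div_eq_mul_inv,
    div_le_div_iff₀ (by positivity) (by positivity)]

lemma hasDerivAt_inv_sqrt_one_add_mul_sq {γ : ℝ} (hγ : 0 ≤ γ) (t : ℝ) :
    HasDerivAt (fun t => (√(1 + γ * t ^ 2))⁻¹)
      (-(γ * t) * (1 + γ * t ^ 2) ^ (-(3 / 2) : ℝ)) t := by
  have hpos (t : ℝ) : 0 < 1 + γ * t ^ 2 := by positivity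
  have hrpow : (fun t => (√(1 + γ * t ^ 2))⁻¹) = fun t => (1 + γ * t ^ 2) ^ (-(1 / 2) : ℝ) := by
    funext t
    rw [Real.sqrt_eq_rpow, Real.rpow_neg (hpos t).le]
  have hinner : HasDerivAt (fun t => 1 + γ * t ^ 2) (γ * (2 * t)) t := by
    simpa using ((hasDerivAt_pow 2 t).const_mul γ).const_add 1
  rw [hrpow]
  convert hinner.rpow_const (p := -(1 / 2)) (Or.inl (hpos t).ne') using 1
  rw [show (-(1 / 2) : ℝ) - 1 = -(3 / 2) by norm_num]
  ring

lemma abs_inv_sqrt_one_add_mul_sq_sub_le {γ C a b : ℝ} (hγ : 0 ≤ γ)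
    (hC : ∀ t ∈ Set.Icc a b, γ * |t| * (1 + γ * t ^ 2) ^ (-(3 / 2) : ℝ) ≤ C)
    {s t : ℝ} (hs : s ∈ Set.Icc a b) (ht : t ∈ Set.Icc a b) :
    |(√(1 + γ * s ^ 2))⁻¹ - (√(1 + γ * t ^ 2))⁻¹| ≤ C * |s - t| := by
  refine (convex_Icc a b).norm_image_sub_le_of_norm_hasDerivWithin_le
    (fun x _ => (hasDerivAt_inv_sqrt_one_add_mul_sq hγ x).hasDerivWithinAt) (fun x hx => ?_) ht hs
  rw [Real.norm_eq_abs, abs_mul, abs_neg, abs_mul, abs_of_nonneg hγ,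
    abs_of_nonneg (by positivity : (0 : ℝ) ≤ (1 + γ * x ^ 2) ^ (-(3 / 2) : ℝ))]
  exact hC x hx

lemma mul_abs_mul_one_add_rpow_le_sqrt {γ : ℝ} (hγ : 0 ≤ γ) (t : ℝ) :
    γ * |t| * (1 + γ * t ^ 2) ^ (-(3 / 2) : ℝ) ≤ 2 / (3 * √3) * √γ := by
  have h := mul_rpow_neg_three_halves_le_iff (a := γ * |t|) (b := 2 / (3 * √3) * √γ)
    (u := 1 + γ * t ^ 2) (v := 1) (by positivity) (by positivity) (by positivity) one_pos
  rw [Real.one_rpow, mul_one, one_pow, mul_one] at h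
  have hb : (2 / (3 * √3) * √γ) ^ 2 = 4 / 27 * γ := by
    rw [mul_pow, div_pow, mul_pow, Real.sq_sqrt hγ, Real.sq_sqrt (by norm_num)]
    norm_num
  have hu : 0 ≤ γ * t ^ 2 := by positivity
  -- `4 (1 + u)³ - 27 u = (2u - 1)² (u + 4)`
  have hcubic : 27 * (γ * t ^ 2) ≤ 4 * (1 + γ * t ^ 2) ^ 3 := by
    nlinarith [mul_nonneg (sq_nonneg (2 * (γ * t ^ 2) - 1)) (by linarith : 0 ≤ γ * t ^ 2 + 4)]
  rw [h, hb, mul_pow, sq_abs]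
  nlinarith [mul_le_mul_of_nonneg_left hcubic hγ]

lemma mul_one_add_pow_three_le {x y : ℝ} (hx : 0 ≤ x) (hxy : x ≤ y) (hy : y ≤ 1 / 2) :
    x * (1 + y) ^ 3 ≤ y * (1 + x) ^ 3 := by
  have hxy' : x * y ≤ 1 / 4 := by nlinarith
  have hbracket : 0 ≤ 1 - 3 * x * y - x * y * (x + y) := by nlinarith
  -- `y (1 + x)³ - x (1 + y)³ = (y - x) (1 - 3xy - xy (x + y))`
  nlinarith [mul_nonneg (sub_nonneg.mpr hxy) hbracket]

lemma mul_abs_mul_one_add_rpow_le_of_le {γ t : ℝ} (hγ : 0 ≤ γ) (hγ' : γ ≤ 1 / 32) (ht : |t| ≤ 4) :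
    γ * |t| * (1 + γ * t ^ 2) ^ (-(3 / 2) : ℝ) ≤ 4 * γ * (1 + 16 * γ) ^ (-(3 / 2) : ℝ) := by
  rw [mul_rpow_neg_three_halves_le_iff (by positivity) (by positivity) (by positivity)
    (by positivity)]
  have ht2 : t ^ 2 ≤ 16 := by nlinarith [sq_abs t, abs_nonneg t]
  have h := mul_one_add_pow_three_le (x := γ * t ^ 2) (y := 16 * γ) (by positivity)
    (by nlinarith) (by linarith)
  calc (γ * |t|) ^ 2 * (1 + 16 * γ) ^ 3 = γ * ((γ * t ^ 2) * (1 + 16 * γ) ^ 3) := by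
        rw [mul_pow, sq_abs]; ring
    _ ≤ γ * ((16 * γ) * (1 + γ * t ^ 2) ^ 3) := mul_le_mul_of_nonneg_left h hγ
    _ = (4 * γ) ^ 2 * (1 + γ * t ^ 2) ^ 3 := by ring

end ScalarBounds

section Lipschitz

variable {m n : Type*} [Fintype m] [Fintype n] [DecidableEq n]

lemma abs_specNorm_invSqrt_mul_sub_le {L : Matrix n n ℝ} (hL : IsSelfAdjoint L) {γ : ℝ}
    (hγ : 0 ≤ γ) (Z : Matrix n m ℝ) {k k' c : ℝ} (hc : 0 ≤ c)
    (h : ∀ x ∈ spectrum ℝ L, |(√(1 + γ * (k + x) ^ 2))⁻¹ - (√(1 + γ * (k' + x) ^ 2))⁻¹| ≤ c) :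
    |specNorm (invSqrt (1 + γ • (k • 1 + L) ^ 2) * Z) -
        specNorm (invSqrt (1 + γ • (k' • 1 + L) ^ 2) * Z)| ≤ c * specNorm Z := by
  have hpos (k : ℝ) : ∀ x ∈ spectrum ℝ L, 0 < 1 + γ * (k + x) ^ 2 := fun _ _ => by positivity
  simp only [specNorm_eq_l2_opNorm, one_add_smul_sq_eq_cfc hL, invSqrt_cfc hL (hpos _)]
  exact abs_norm_cfc_mul_sub_norm_cfc_mul_le hc h Z

lemma abs_specNorm_invSqrt_mul_sub_le_mul {L : Matrix n n ℝ} (hL : IsSelfAdjoint L)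
    {a b c d : ℝ} (hspec : spectrum ℝ L ⊆ Set.Icc a b) {γ C : ℝ} (hγ : 0 ≤ γ) (hC0 : 0 ≤ C)
    (hC : ∀ t ∈ Set.Icc (c + a) (d + b), γ * |t| * (1 + γ * t ^ 2) ^ (-(3 / 2) : ℝ) ≤ C)
    (Z : Matrix n m ℝ) {k k' : ℝ} (hk : k ∈ Set.Icc c d) (hk' : k' ∈ Set.Icc c d) :
    |specNorm (invSqrt (1 + γ • (k • 1 + L) ^ 2) * Z) -
        specNorm (invSqrt (1 + γ • (k' • 1 + L) ^ 2) * Z)| ≤ C * specNorm Z * |k - k'| := by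
  rw [mul_right_comm]
  refine abs_specNorm_invSqrt_mul_sub_le hL hγ Z (by positivity) fun x hx => ?_
  have hshift (k : ℝ) (hk : k ∈ Set.Icc c d) : k + x ∈ Set.Icc (c + a) (d + b) :=
    ⟨add_le_add hk.1 (hspec hx).1, add_le_add hk.2 (hspec hx).2⟩
  simpa using abs_inv_sqrt_one_add_mul_sq_sub_le hγ hC (hshift k hk) (hshift k' hk')

end Lipschitz

/-- Lipschitz bound for `f(k̄) = ‖(I + γ(k̄ I + L)²)^{-1/2} Z‖₂` on `[0,4]`
when the eigenvalues of symmetric `L` lie in `[-4, 0]`. -/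
theorem stmt12 {n T : ℕ} (L : Matrix (Fin n) (Fin n) ℝ) (hSymm : L.IsSymm)
    (hNeg : (-L).PosSemidef)
    (hShift : (L + (4 : ℝ) • (1 : Matrix (Fin n) (Fin n) ℝ)).PosSemidef)
    (γ : ℝ) (hγ : 0 < γ) (Z : Matrix (Fin n) (Fin T) ℝ)
    (f : ℝ → ℝ)
    (hf : ∀ k : ℝ, f k = specNorm (invSqrt ((1 : Matrix (Fin n) (Fin n) ℝ)
        + γ • (k • (1 : Matrix (Fin n) (Fin n) ℝ) + L) ^ 2) * Z)) :
    (∀ k ∈ Set.Icc (0 : ℝ) 4, ∀ k' ∈ Set.Icc (0 : ℝ) 4,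
      |f k - f k'| ≤
        (if 1 / 32 ≤ γ then 2 / (3 * Real.sqrt 3) * Real.sqrt γ * specNorm Z
          else 4 * γ * (1 + 16 * γ) ^ (-(3/2) : ℝ) * specNorm Z)
        * |k - k'|) ∧
    (∀ k ∈ Set.Icc (0 : ℝ) 4, ∀ k' ∈ Set.Icc (0 : ℝ) 4,
      |f k - f k'| ≤ 2 / (3 * Real.sqrt 3) * Real.sqrt γ * specNorm Z * |k - k'|) := by
  have hL : IsSelfAdjoint L := isHermitian_iff_isSymm.mpr hSymm
  have hspec : spectrum ℝ L ⊆ Set.Icc (-4) 0 :=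
    spectrum_subset_Icc_of_posSemidef hL (by simpa using hShift) (by simpa using hNeg)
  have lipschitz (C : ℝ)
      (hC : ∀ t ∈ Set.Icc (-4 : ℝ) 4, γ * |t| * (1 + γ * t ^ 2) ^ (-(3 / 2) : ℝ) ≤ C)
      (k : ℝ) (hk : k ∈ Set.Icc (0 : ℝ) 4) (k' : ℝ) (hk' : k' ∈ Set.Icc (0 : ℝ) 4) :
      |f k - f k'| ≤ C * specNorm Z * |k - k'| := by
    have hC0 : 0 ≤ C := by simpa using hC 0 (by norm_num)
    rw [hf, hf]
    exact abs_specNorm_invSqrt_mul_sub_le_mul hL hspec hγ.le hC0 (by simpa using hC) Z hk hk'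
  have hglobal (t : ℝ) (_ : t ∈ Set.Icc (-4 : ℝ) 4) := mul_abs_mul_one_add_rpow_le_sqrt hγ.le t
  refine ⟨fun k hk k' hk' => ?_, lipschitz _ hglobal⟩
  split_ifs with hγ'
  · exact lipschitz _ hglobal k hk k' hk'
  · exact lipschitz _ (fun t ht => mul_abs_mul_one_add_rpow_le_of_le hγ.le (by linarith)
      (abs_le.mpr ht)) k hk k' hk'
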